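/- arXiv:2104.08406 — 3 statements merged into one kernel-verified Lean document; each statement's English description precedes it below -/
import Mathlib

section
/- If h: ℝ^n → ℝ is continuously differentiable with ∇h Lipschitz of constant L₁ on X + η𝔹, then for all x ∈ X, ‖∇h_η(x) − ∇h(x)‖ ≤ η L₁ n, where h_η is the spherical smoothing with parameter η. -/
/-! Differentiating under the integral sign, `∇h_η(x)` is the ball average of `∇h(x + η u)`.
Each of these gradients lies within `η L₁` of `∇h(x)` because `x + η u ∈ X + η𝔹`, so their
average does too, and `η L₁ ≤ η L₁ n` as soon as `n ≥ 1` (for `n = 0` both gradients vanish). -/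

open MeasureTheory Metric Set Pointwise Filter

noncomputable def ballUniform (n : ℕ) : Measure (EuclideanSpace ℝ (Fin n)) :=
  (volume (closedBall (0 : EuclideanSpace ℝ (Fin n)) 1))⁻¹ • volume.restrict (closedBall 0 1)

/-- Spherical smoothing: `h_η(x) = E_{u ∈ 𝔹}[h(x + η u)]` with `u` uniform on the unit ball. -/
noncomputable def smoothed (n : ℕ) (η : ℝ) (h : EuclideanSpace ℝ (Fin n) → ℝ)
    (x : EuclideanSpace ℝ (Fin n)) : ℝ :=
  ∫ u, h (x + η • u) ∂(ballUniform n)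

section AverageOverCompact

variable {E F : Type*} [NormedAddCommGroup E] [NormedSpace ℝ E] [FiniteDimensional ℝ E]
  [MeasurableSpace E] [BorelSpace E] [NormedAddCommGroup F] [NormedSpace ℝ F]
  {μ : Measure E} [IsFiniteMeasure μ] {K : Set E}

theorem Continuous.integrable_of_ae_mem_isCompact {G : Type*} [NormedAddCommGroup G]
    {f : E → G} (hf : Continuous f) (hK : IsCompact K) (hμK : ∀ᵐ u ∂μ, u ∈ K) :
    Integrable f μ := by
  rw [← Measure.restrict_eq_self_of_ae_mem hμK]
  exact hf.continuousOn.integrableOn_compact hK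

theorem hasFDerivAt_integral_comp_add_smul (hK : IsCompact K) (hμK : ∀ᵐ u ∂μ, u ∈ K)
    {h : E → F} (hh : ContDiff ℝ 1 h) (η : ℝ) (x : E) :
    HasFDerivAt (fun y ↦ ∫ u, h (y + η • u) ∂μ) (∫ u, fderiv ℝ h (x + η • u) ∂μ) x := by
  have hd : Differentiable ℝ h := hh.differentiable one_ne_zero
  have hfc : Continuous (fderiv ℝ h) := hh.continuous_fderiv one_ne_zero
  obtain ⟨C, hC⟩ := ((isCompact_closedBall x 1).add (hK.smul η)).exists_bound_of_continuousOn
    hfc.continuousOn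
  refine hasFDerivAt_integral_of_dominated_of_fderiv_le (bound := fun _ ↦ C)
    (F' := fun y u ↦ fderiv ℝ h (y + η • u)) (ball_mem_nhds x one_pos)
    (Eventually.of_forall fun y ↦ (hd.continuous.comp (by fun_prop)).aestronglyMeasurable)
    ((hd.continuous.comp (by fun_prop)).integrable_of_ae_mem_isCompact hK hμK)
    (hfc.comp (by fun_prop)).aestronglyMeasurable ?_ (integrable_const C) ?_
  · filter_upwards [hμK] with u hu y hy
    exact hC _ (add_mem_add (ball_subset_closedBall hy) (smul_mem_smul_set hu))
  · filter_upwards with u y _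
    exact (hd (y + η • u)).hasFDerivAt.comp y ((hasFDerivAt_id y).add_const (η • u))

end AverageOverCompact

theorem norm_integral_sub_le_of_ae_norm_sub_le {α G : Type*} [MeasurableSpace α]
    [NormedAddCommGroup G] [NormedSpace ℝ G] [CompleteSpace G] {μ : Measure α}
    [IsProbabilityMeasure μ] {f : α → G} (hf : Integrable f μ) (c : G) {C : ℝ}
    (hC : ∀ᵐ a ∂μ, ‖f a - c‖ ≤ C) :
    ‖(∫ a, f a ∂μ) - c‖ ≤ C := by
  have hle := norm_integral_le_of_norm_le_const hC
  rwa [probReal_univ, mul_one, integral_sub hf (integrable_const c), integral_const,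
    probReal_univ, one_smul] at hle

theorem norm_gradient_sub_gradient {n : ℕ} (f g : EuclideanSpace ℝ (Fin n) → ℝ)
    (x y : EuclideanSpace ℝ (Fin n)) :
    ‖gradient f x - gradient g y‖ = ‖fderiv ℝ f x - fderiv ℝ g y‖ := by
  rw [gradient, gradient, ← map_sub, LinearIsometryEquiv.norm_map]

instance isProbabilityMeasure_ballUniform (n : ℕ) : IsProbabilityMeasure (ballUniform n) := by
  have h0 : volume (closedBall (0 : EuclideanSpace ℝ (Fin n)) 1) ≠ 0 :=
    (measure_closedBall_pos volume 0 one_pos).ne'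
  constructor
  simp [ballUniform, ENNReal.inv_mul_cancel h0 measure_closedBall_lt_top.ne]

theorem ae_mem_closedBall_ballUniform (n : ℕ) :
    ∀ᵐ u ∂(ballUniform n), u ∈ closedBall (0 : EuclideanSpace ℝ (Fin n)) 1 :=
  Measure.ae_smul_measure (ae_restrict_mem measurableSet_closedBall) _

theorem fderiv_smoothed {n : ℕ} {h : EuclideanSpace ℝ (Fin n) → ℝ} (hh : ContDiff ℝ 1 h)
    (η : ℝ) (x : EuclideanSpace ℝ (Fin n)) :
    fderiv ℝ (smoothed n η h) x = ∫ u, fderiv ℝ h (x + η • u) ∂(ballUniform n) :=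
  (hasFDerivAt_integral_comp_add_smul (isCompact_closedBall 0 1)
    (ae_mem_closedBall_ballUniform n) hh η x).fderiv

theorem smoothed_gradient_close (n : ℕ) (X : Set (EuclideanSpace ℝ (Fin n))) (η L₁ : ℝ)
    (hη : 0 < η) (hL₁ : 0 ≤ L₁) (h : EuclideanSpace ℝ (Fin n) → ℝ)
    (hC1 : ContDiff ℝ 1 h)
    (hLipGrad : ∀ a ∈ X + closedBall (0 : EuclideanSpace ℝ (Fin n)) η,
      ∀ b ∈ X + closedBall (0 : EuclideanSpace ℝ (Fin n)) η,
        ‖gradient h a - gradient h b‖ ≤ L₁ * ‖a - b‖) :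
    ∀ x ∈ X, ‖gradient (smoothed n η h) x - gradient h x‖ ≤ η * L₁ * n := by
  intro x hx
  rcases n.eq_zero_or_pos with rfl | hn
  · simp [Subsingleton.elim (gradient (smoothed 0 η h) x - gradient h x) 0]
  have hxX : x ∈ X + closedBall 0 η := ⟨x, hx, 0, mem_closedBall_self hη.le, add_zero x⟩
  have hclose : ∀ᵐ u ∂(ballUniform n), ‖fderiv ℝ h (x + η • u) - fderiv ℝ h x‖ ≤ η * L₁ := by
    filter_upwards [ae_mem_closedBall_ballUniform n] with u hu
    have hηu : ‖η • u‖ ≤ η := by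
      simpa [norm_smul, abs_of_pos hη] using
        mul_le_of_le_one_right hη.le (mem_closedBall_zero_iff.mp hu)
    rw [← norm_gradient_sub_gradient]
    calc ‖gradient h (x + η • u) - gradient h x‖ ≤ L₁ * ‖η • u‖ := by
          simpa using hLipGrad _ (add_mem_add hx (mem_closedBall_zero_iff.mpr hηu)) _ hxX
      _ ≤ η * L₁ := by rw [mul_comm η]; exact mul_le_mul_of_nonneg_left hηu hL₁
  have hint : Integrable (fun u ↦ fderiv ℝ h (x + η • u)) (ballUniform n) :=
    ((hC1.continuous_fderiv one_ne_zero).comp (by fun_prop)).integrable_of_ae_mem_isCompact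
      (isCompact_closedBall 0 1) (ae_mem_closedBall_ballUniform n)
  rw [norm_gradient_sub_gradient, fderiv_smoothed hC1]
  calc _ ≤ η * L₁ := norm_integral_sub_le_of_ae_norm_sub_le hint _ hclose
    _ ≤ η * L₁ * n := le_mul_of_one_le_right (by positivity) (by exact_mod_cast hn)
end

section
/- Let h be L₀-Lipschitz on X + η𝔹 and define the zeroth-order gradient estimator g_η(x, v) := (n/η)·(h(x+v) − h(x))·v/‖v‖ for v ∈ η𝕊. Then for every x ∈ X, E_{v∈η𝕊}[‖g_η(x, v)‖²] ≤ L₀² n². -/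
open MeasureTheory Metric Set Pointwise Filter

/-- Uniform distribution on the sphere of radius `η`: pushforward of the uniform ball
distribution under radial projection `u ↦ (η/‖u‖) • u`. -/
noncomputable def sphereUniform (n : ℕ) (η : ℝ) : Measure (EuclideanSpace ℝ (Fin n)) :=
  Measure.map (fun u => (η / ‖u‖) • u) (ballUniform n)

instance ballUniform.isProbabilityMeasure (n : ℕ) : IsProbabilityMeasure (ballUniform n) := by
  constructor
  have hpos : volume (closedBall (0 : EuclideanSpace ℝ (Fin n)) 1) ≠ 0 :=
    (measure_closedBall_pos volume 0 one_pos).ne'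
  simp [ballUniform, ENNReal.inv_mul_cancel hpos measure_closedBall_lt_top.ne]

lemma measurable_div_norm_smul (n : ℕ) (η : ℝ) :
    Measurable (fun u : EuclideanSpace ℝ (Fin n) => (η / ‖u‖) • u) :=
  (measurable_const.div measurable_norm).smul measurable_id

instance sphereUniform.isProbabilityMeasure (n : ℕ) (η : ℝ) :
    IsProbabilityMeasure (sphereUniform n η) :=
  Measure.isProbabilityMeasure_map (measurable_div_norm_smul n η).aemeasurable

lemma norm_div_norm_smul_le {E : Type*} [SeminormedAddCommGroup E] [NormedSpace ℝ E]
    (a : ℝ) (v : E) : ‖(a / ‖v‖) • v‖ ≤ |a| := by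
  rcases (norm_nonneg v).eq_or_lt with hv | hv
  · simp [← hv]
  · rw [norm_smul, Real.norm_eq_abs, abs_div, abs_norm, div_mul_cancel₀ _ hv.ne']

lemma ae_mem_closedBall_sphereUniform (n : ℕ) (η : ℝ) :
    ∀ᵐ v ∂(sphereUniform n η), v ∈ closedBall 0 |η| := by
  rw [sphereUniform, ae_map_iff (measurable_div_norm_smul n η).aemeasurable
    (p := (· ∈ closedBall 0 |η|)) isClosed_closedBall.measurableSet]
  exact ae_of_all _ fun u => mem_closedBall_zero_iff.2 (norm_div_norm_smul_le η u)

lemma norm_estimator_le {E : Type*} [SeminormedAddCommGroup E] [NormedSpace ℝ E]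
    {h : E → ℝ} {x v : E} {c η L : ℝ} (hc : 0 ≤ c) (hη : 0 < η) (hL : 0 ≤ L)
    (hv : ‖v‖ ≤ η) (hLip : |h (x + v) - h x| ≤ L * ‖v‖) :
    ‖((c / η) * (h (x + v) - h x) / ‖v‖) • v‖ ≤ L * c :=
  calc ‖((c / η) * (h (x + v) - h x) / ‖v‖) • v‖
      ≤ |(c / η) * (h (x + v) - h x)| := norm_div_norm_smul_le _ v
    _ = (c / η) * |h (x + v) - h x| := by rw [abs_mul, abs_of_nonneg (by positivity)]
    _ ≤ (c / η) * (L * η) := by gcongr; exact hLip.trans (by gcongr)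
    _ = L * c := by field_simp

theorem zeroth_order_second_moment (n : ℕ) (X : Set (EuclideanSpace ℝ (Fin n))) (η L₀ : ℝ)
    (hη : 0 < η) (hL₀ : 0 ≤ L₀) (h : EuclideanSpace ℝ (Fin n) → ℝ)
    (hLip : ∀ a ∈ X + closedBall (0 : EuclideanSpace ℝ (Fin n)) η,
      ∀ b ∈ X + closedBall (0 : EuclideanSpace ℝ (Fin n)) η, |h a - h b| ≤ L₀ * ‖a - b‖) :
    ∀ x ∈ X,
      ∫ v, ‖(((n : ℝ) / η) * (h (x + v) - h x) / ‖v‖) • v‖ ^ 2 ∂(sphereUniform n η) ≤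
        L₀ ^ 2 * n ^ 2 := by
  intro x hx
  have hbound : ∀ᵐ v ∂(sphereUniform n η),
      ‖(((n : ℝ) / η) * (h (x + v) - h x) / ‖v‖) • v‖ ^ 2 ≤ L₀ ^ 2 * n ^ 2 := by
    filter_upwards [ae_mem_closedBall_sphereUniform n η] with v hv
    rw [abs_of_pos hη] at hv
    have hxv : x + v ∈ X + closedBall 0 η := add_mem_add hx hv
    have hx0 : x ∈ X + closedBall 0 η := by
      simpa using add_mem_add hx (mem_closedBall_self (x := (0 : EuclideanSpace ℝ (Fin n)))
        hη.le)
    have hstep : |h (x + v) - h x| ≤ L₀ * ‖v‖ := by simpa using hLip _ hxv _ hx0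
    rw [← mul_pow]
    exact pow_le_pow_left₀ (norm_nonneg _)
      (norm_estimator_le n.cast_nonneg hη hL₀ (mem_closedBall_zero_iff.1 hv) hstep) 2
  calc _ ≤ ∫ _, L₀ ^ 2 * (n : ℝ) ^ 2 ∂(sphereUniform n η) :=
        integral_mono_of_nonneg (ae_of_all _ fun _ => sq_nonneg _) (integrable_const _) hbound
    _ = L₀ ^ 2 * n ^ 2 := by simp
end

section
/- Let X ⊆ ℝ^n be nonempty, closed and convex, f: ℝ^n → ℝ continuously differentiable with ∇f Lipschitz of constant L on X, and γ ∈ (0, 1/L). Let x⁺ := Π_X[x − γ(∇f(x) + e)] for some error vector e. Then f(x⁺) ≤ f(x) + (−1 + Lγ)·(γ/4)·‖G_{1/γ}(x)‖² + (1 − Lγ/2)·γ·‖e‖², where G_{1/γ}(x) := (1/γ)(x − Π_X[x − γ∇f(x)]). -/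
open Metric Set
open scoped RealInnerProductSpace

/-! The descent lemma bounds `f x⁺` by the linearization at `x` plus `(L/2)‖x⁺ - x‖²`. The
variational inequality of the projection, tested at `x`, and Young's inequality for the error
term turn the linear term into `-(1/(2γ))‖x - x⁺‖² + (γ/2)‖e‖²`. As `Lγ < 1`, the coefficient of
`‖x - x⁺‖²` is negative, and nonexpansiveness of the projection bounds this quantity from below:
`‖x - Π_X[x - γ∇f(x)]‖² ≤ 2‖x - x⁺‖² + 2γ²‖e‖²`. -/

theorem apply_one_le_of_hasDerivAt_le_add_mul {h h' : ℝ → ℝ} {C : ℝ}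
    (hd : ∀ t ∈ Icc (0 : ℝ) 1, HasDerivAt h (h' t) t)
    (hle : ∀ t ∈ Ioo (0 : ℝ) 1, h' t ≤ h' 0 + C * t) :
    h 1 ≤ h 0 + h' 0 + C / 2 := by
  set φ : ℝ → ℝ := fun t => h t - t * h' 0 - C / 2 * t ^ 2
  have hφ : ∀ t ∈ Icc (0 : ℝ) 1, HasDerivAt φ (h' t - h' 0 - C * t) t := fun t ht => by
    refine (((hd t ht).sub (hasDerivAt_mul_const (h' 0))).sub
      ((hasDerivAt_pow 2 t).const_mul (C / 2))).congr_deriv ?_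
    push_cast
    ring
  have hanti : AntitoneOn φ (Icc 0 1) := by
    apply antitoneOn_of_deriv_nonpos (convex_Icc 0 1)
    · exact fun t ht => (hφ t ht).continuousAt.continuousWithinAt
    · rw [interior_Icc]
      exact fun t ht => (hφ t (Ioo_subset_Icc_self ht)).differentiableAt.differentiableWithinAt
    · rw [interior_Icc]
      intro t ht
      rw [(hφ t (Ioo_subset_Icc_self ht)).deriv]
      linarith [hle t ht]
  have := hanti (by norm_num) (by norm_num) zero_le_one
  simp only [φ] at this
  linarith

section InnerProductSpace

variable {E : Type*} [NormedAddCommGroup E] [InnerProductSpace ℝ E]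

theorem hasDerivAt_apply_add_smul [CompleteSpace E] {f : E → ℝ} {x v : E} {t : ℝ}
    (hf : DifferentiableAt ℝ f (x + t • v)) :
    HasDerivAt (fun s : ℝ => f (x + s • v)) ⟪gradient f (x + t • v), v⟫ t := by
  have hline : HasDerivAt (fun s : ℝ => x + s • v) v t := by
    simpa using ((hasDerivAt_id t).smul_const v).const_add x
  refine (hf.hasGradientAt.hasFDerivAt.comp_hasDerivAt t hline).congr_deriv ?_
  simp

theorem Convex.apply_le_add_inner_gradient_add_sq [CompleteSpace E] {X : Set E}
    (hX : Convex ℝ X) {f : E → ℝ} (hf : ∀ z ∈ X, DifferentiableAt ℝ f z) {L : ℝ}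
    (hL : ∀ a ∈ X, ∀ b ∈ X, ‖gradient f a - gradient f b‖ ≤ L * ‖a - b‖)
    {x y : E} (hx : x ∈ X) (hy : y ∈ X) :
    f y ≤ f x + ⟪gradient f x, y - x⟫ + L / 2 * ‖y - x‖ ^ 2 := by
  set v := y - x
  have hseg : ∀ t ∈ Icc (0 : ℝ) 1, x + t • v ∈ X := fun t ht => by
    convert hX hx hy (sub_nonneg.2 ht.2) ht.1 (by ring) using 1
    simp only [v]
    module
  have hendpoints := apply_one_le_of_hasDerivAt_le_add_mul (C := L * ‖v‖ ^ 2)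
    (fun t ht => hasDerivAt_apply_add_smul (hf _ (hseg t ht))) fun t ht => by
      have hlip := hL _ (hseg t (Ioo_subset_Icc_self ht)) x hx
      rw [add_sub_cancel_left, norm_smul, Real.norm_of_nonneg ht.1.le] at hlip
      have := real_inner_le_norm (gradient f (x + t • v) - gradient f x) v
      rw [inner_sub_left] at this
      simp only [zero_smul, add_zero]
      nlinarith [norm_nonneg v]
  simp only [zero_smul, add_zero, one_smul, add_sub_cancel, v] at hendpoints
  linarith

theorem norm_sub_le_of_real_inner_sub_le_zero {u₁ u₂ p₁ p₂ : E}
    (h₁ : ⟪u₁ - p₁, p₂ - p₁⟫ ≤ 0) (h₂ : ⟪u₂ - p₂, p₁ - p₂⟫ ≤ 0) :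
    ‖p₁ - p₂‖ ≤ ‖u₁ - u₂‖ := by
  have hsq : ‖p₁ - p₂‖ ^ 2 ≤ ⟪u₁ - u₂, p₁ - p₂⟫ := by
    have hflip : ⟪u₁ - p₁, p₂ - p₁⟫ = -⟪u₁ - p₁, p₁ - p₂⟫ := by
      rw [← inner_neg_right, neg_sub]
    have hsplit : ⟪u₁ - u₂, p₁ - p₂⟫ - ‖p₁ - p₂‖ ^ 2 =
        ⟪u₁ - p₁, p₁ - p₂⟫ - ⟪u₂ - p₂, p₁ - p₂⟫ := by
      rw [← real_inner_self_eq_norm_sq, ← inner_sub_left, ← inner_sub_left]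
      congr 1
      abel
    linarith
  have hcs := real_inner_le_norm (u₁ - u₂) (p₁ - p₂)
  nlinarith [norm_nonneg (p₁ - p₂), norm_nonneg (u₁ - u₂)]

def IsNearestPointMap (K : Set E) (proj : E → E) : Prop :=
  ∀ u, proj u ∈ K ∧ ∀ z ∈ K, ‖u - proj u‖ ≤ ‖u - z‖

namespace IsNearestPointMap

variable {K : Set E} {proj : E → E}

theorem real_inner_le_zero (hproj : IsNearestPointMap K proj) (hK : Convex ℝ K) (u : E) :
    ∀ z ∈ K, ⟪u - proj u, z - proj u⟫ ≤ 0 := by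
  obtain ⟨hmem, hmin⟩ := hproj u
  have : Nonempty K := ⟨⟨proj u, hmem⟩⟩
  refine (norm_eq_iInf_iff_real_inner_le_zero hK hmem).1
    (le_antisymm (le_ciInf fun z => hmin z z.2) (ciInf_le ?_ (⟨proj u, hmem⟩ : K)))
  exact ⟨0, by rintro _ ⟨z, rfl⟩; exact norm_nonneg _⟩

theorem norm_sub_le (hproj : IsNearestPointMap K proj) (hK : Convex ℝ K) (u v : E) :
    ‖proj u - proj v‖ ≤ ‖u - v‖ :=
  norm_sub_le_of_real_inner_sub_le_zero (hproj.real_inner_le_zero hK u _ (hproj v).1)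
    (hproj.real_inner_le_zero hK v _ (hproj u).1)

theorem sq_norm_sub_le (hproj : IsNearestPointMap K proj) (hK : Convex ℝ K) (x u v : E) :
    ‖x - proj u‖ ^ 2 ≤ 2 * ‖x - proj v‖ ^ 2 + 2 * ‖u - v‖ ^ 2 := by
  have htri : ‖x - proj u‖ ≤ ‖x - proj v‖ + ‖u - v‖ :=
    calc ‖x - proj u‖ ≤ ‖x - proj v‖ + ‖proj v - proj u‖ := norm_sub_le_norm_sub_add_norm_sub ..
      _ ≤ ‖x - proj v‖ + ‖v - u‖ := by gcongr; exact hproj.norm_sub_le hK v u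
      _ = ‖x - proj v‖ + ‖u - v‖ := by rw [norm_sub_rev v u]
  nlinarith [norm_nonneg (x - proj u), sq_nonneg (‖x - proj v‖ - ‖u - v‖)]

theorem apply_gradient_step_le [CompleteSpace E] (hproj : IsNearestPointMap K proj)
    (hK : Convex ℝ K) {f : E → ℝ} (hf : ∀ z ∈ K, DifferentiableAt ℝ f z) {L : ℝ}
    (hL : ∀ a ∈ K, ∀ b ∈ K, ‖gradient f a - gradient f b‖ ≤ L * ‖a - b‖)
    {γ : ℝ} (hγ : 0 < γ) {x : E} (hx : x ∈ K) (e : E) :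
    f (proj (x - γ • (gradient f x + e))) ≤
      f x + (L * γ - 1) / (2 * γ) * ‖x - proj (x - γ • (gradient f x + e))‖ ^ 2 +
        γ / 2 * ‖e‖ ^ 2 := by
  set g := gradient f x
  set xp := proj (x - γ • (g + e))
  have hdesc := hK.apply_le_add_inner_gradient_add_sq hf hL hx (hproj (x - γ • (g + e))).1
  have hvi : ‖x - xp‖ ^ 2 ≤ γ * ⟪g, x - xp⟫ + γ * ⟪e, x - xp⟫ := by
    have h := hproj.real_inner_le_zero hK (x - γ • (g + e)) x hx
    rw [show x - γ • (g + e) - xp = (x - xp) - γ • (g + e) by module, inner_sub_left,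
      real_inner_self_eq_norm_sq, real_inner_smul_left, inner_add_left] at h
    linarith
  have hyoung : γ * ⟪e, x - xp⟫ ≤ γ ^ 2 / 2 * ‖e‖ ^ 2 + ‖x - xp‖ ^ 2 / 2 := by
    nlinarith [real_inner_le_norm e (x - xp), sq_nonneg (γ * ‖e‖ - ‖x - xp‖)]
  have hflip : ⟪g, xp - x⟫ = -⟪g, x - xp⟫ := by rw [← inner_neg_right, neg_sub]
  rw [hflip, norm_sub_rev] at hdesc
  have hinner : -⟪g, x - xp⟫ ≤ (γ ^ 2 / 2 * ‖e‖ ^ 2 - ‖x - xp‖ ^ 2 / 2) / γ := by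
    rw [le_div_iff₀ hγ]
    linarith
  calc f xp ≤ f x + -⟪g, x - xp⟫ + L / 2 * ‖x - xp‖ ^ 2 := hdesc
    _ ≤ f x + (γ ^ 2 / 2 * ‖e‖ ^ 2 - ‖x - xp‖ ^ 2 / 2) / γ + L / 2 * ‖x - xp‖ ^ 2 := by
      gcongr
    _ = f x + (L * γ - 1) / (2 * γ) * ‖x - xp‖ ^ 2 + γ / 2 * ‖e‖ ^ 2 := by
      field_simp
      ring

end IsNearestPointMap

end InnerProductSpace

theorem descent_step_bound_general (n : ℕ) (X : Set (EuclideanSpace ℝ (Fin n)))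
    (hXc : Convex ℝ X)
    (f : EuclideanSpace ℝ (Fin n) → ℝ) (hf : ContDiff ℝ 1 f)
    (L : ℝ) (hL : 0 < L)
    (hLipGrad : ∀ a ∈ X, ∀ b ∈ X, ‖gradient f a - gradient f b‖ ≤ L * ‖a - b‖)
    (γ : ℝ) (hγ0 : 0 < γ) (hγL : γ < 1 / L)
    (proj : EuclideanSpace ℝ (Fin n) → EuclideanSpace ℝ (Fin n))
    (hproj : ∀ u, proj u ∈ X ∧ ∀ z ∈ X, ‖u - proj u‖ ≤ ‖u - z‖)
    (x : EuclideanSpace ℝ (Fin n)) (hx : x ∈ X) (e : EuclideanSpace ℝ (Fin n)) :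
    f (proj (x - γ • (gradient f x + e))) ≤
      f x + (-1 + L * γ) * (γ / 4) * ‖γ⁻¹ • (x - proj (x - γ • gradient f x))‖ ^ 2 +
        (1 - L * γ / 2) * γ * ‖e‖ ^ 2 := by
  have hproj : IsNearestPointMap X proj := hproj
  have hstep := hproj.apply_gradient_step_le hXc (fun z _ => hf.differentiable one_ne_zero z)
    hLipGrad hγ0 hx e
  have hres := hproj.sq_norm_sub_le hXc x (x - γ • gradient f x) (x - γ • (gradient f x + e))
  rw [show x - γ • gradient f x - (x - γ • (gradient f x + e)) = γ • e by module, norm_smul,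
    Real.norm_of_nonneg hγ0.le] at hres
  have hcoeff : (L * γ - 1) / (2 * γ) ≤ 0 :=
    div_nonpos_of_nonpos_of_nonneg (by linarith [(lt_div_iff₀' hL).1 hγL]) (by positivity)
  set A := ‖x - proj (x - γ • (gradient f x + e))‖
  set B := ‖x - proj (x - γ • gradient f x)‖
  calc _ ≤ f x + (L * γ - 1) / (2 * γ) * A ^ 2 + γ / 2 * ‖e‖ ^ 2 := hstep
    _ ≤ f x + (L * γ - 1) / (2 * γ) * (B ^ 2 / 2 - γ ^ 2 * ‖e‖ ^ 2) + γ / 2 * ‖e‖ ^ 2 := by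
      gcongr f x + ?_ + _
      exact mul_le_mul_of_nonpos_left (by linarith) hcoeff
    _ = _ := by
      rw [norm_smul, Real.norm_of_nonneg (inv_nonneg.2 hγ0.le)]
      field_simp
      ring

theorem descent_step_bound (n : ℕ) (X : Set (EuclideanSpace ℝ (Fin n)))
    (hXc : Convex ℝ X) (hXcl : IsClosed X) (hXne : X.Nonempty)
    (f : EuclideanSpace ℝ (Fin n) → ℝ) (hf : ContDiff ℝ 1 f)
    (L : ℝ) (hL : 0 < L)
    (hLipGrad : ∀ a ∈ X, ∀ b ∈ X, ‖gradient f a - gradient f b‖ ≤ L * ‖a - b‖)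
    (γ : ℝ) (hγ0 : 0 < γ) (hγL : γ < 1 / L)
    (proj : EuclideanSpace ℝ (Fin n) → EuclideanSpace ℝ (Fin n))
    (hproj : ∀ u, proj u ∈ X ∧ ∀ z ∈ X, ‖u - proj u‖ ≤ ‖u - z‖)
    (x : EuclideanSpace ℝ (Fin n)) (hx : x ∈ X) (e : EuclideanSpace ℝ (Fin n)) :
    f (proj (x - γ • (gradient f x + e))) ≤
      f x + (-1 + L * γ) * (γ / 4) * ‖γ⁻¹ • (x - proj (x - γ • gradient f x))‖ ^ 2 +
        (1 - L * γ / 2) * γ * ‖e‖ ^ 2 :=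
  descent_step_bound_general n X hXc f hf L hL hLipGrad γ hγ0 hγL proj hproj x hx e
end
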